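/- Let X be a nonempty set and Y ⊆ X nonempty. The monoid Ω̄(X,Y) = {f : X → X : f(Y) = Y} is unit-regular if and only if X is finite. -/

import Mathlib

/-!
If `X` is finite and `f '' Y = Y`, choose a section `s` of `f` on `range f` sending `Y` into `Y`.
It is injective, hence extends to a permutation `g`, and `g '' Y = Y` because `Y ⊆ range f` is
finite; then `f ∘ g ∘ f = f`.
Conversely, if `f ∘ g ∘ f = f` with `g` bijective, then `f` is bijective as soon as it is injective
or surjective. On an infinite `X`, one of `Y`, `Yᶜ` is infinite and carries a self-map that is
surjective but not injective (on `Y`) or injective but not surjective (on `Yᶜ`); extended by the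
identity it preserves `Y` and admits no such `g`.
-/

section

open Function Set

theorem Infinite.exists_injective_not_surjective (α : Type*) [Infinite α] :
    ∃ f : α → α, Injective f ∧ ¬Surjective f := by
  obtain ⟨e⟩ : Nonempty (Option α ≃ α) :=
    Cardinal.eq.1 <| by rw [Cardinal.mk_option, Cardinal.add_one_eq (Cardinal.aleph0_le_mk α)]
  refine ⟨e ∘ some, e.injective.comp (Option.some_injective α), fun h => ?_⟩
  obtain ⟨a, ha⟩ := h (e none)
  exact Option.some_ne_none a (e.injective ha)

theorem Infinite.exists_surjective_not_injective (α : Type*) [Infinite α] :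
    ∃ f : α → α, Surjective f ∧ ¬Injective f := by
  obtain ⟨f, hf, hfs⟩ := Infinite.exists_injective_not_surjective α
  refine ⟨invFun f, invFun_surjective hf, fun h => hfs ?_⟩
  exact ((leftInverse_invFun hf).rightInverse_of_injective h).surjective

variable {α : Type*}

namespace Set

open Classical in
/-- The self-map of `α` acting as `φ` on `s` and as the identity off `s`. -/
noncomputable def extendById (s : Set α) (φ : s → s) : α → α :=
  Equiv.Set.sumCompl s ∘ Sum.map φ id ∘ (Equiv.Set.sumCompl s).symm

variable {s : Set α} {φ : s → s}

theorem extendById_of_mem {x : α} (hx : x ∈ s) : s.extendById φ x = φ ⟨x, hx⟩ := by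
  classical
  simp [extendById, Equiv.Set.sumCompl_symm_apply_of_mem hx]

theorem extendById_of_notMem {x : α} (hx : x ∉ s) : s.extendById φ x = x := by
  classical
  simp [extendById, Equiv.Set.sumCompl_symm_apply_of_notMem hx]

theorem injective_extendById : Injective (s.extendById φ) ↔ Injective φ := by
  simp [extendById, EquivLike.injective_comp, Sum.map_injective, injective_id]

theorem surjective_extendById : Surjective (s.extendById φ) ↔ Surjective φ := by
  simp [extendById, EquivLike.comp_surjective, EquivLike.surjective_comp, Sum.map_surjective,
    surjective_id]

theorem image_extendById_self : s.extendById φ '' s = (↑) '' range φ := by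
  ext y
  constructor
  · rintro ⟨x, hx, rfl⟩
    exact ⟨φ ⟨x, hx⟩, mem_range_self _, (extendById_of_mem hx).symm⟩
  · rintro ⟨_, ⟨x, rfl⟩, rfl⟩
    exact ⟨x, x.2, extendById_of_mem x.2⟩

theorem InjOn.exists_perm_eqOn [Finite α] {u : α → α} (hu : InjOn u s) :
    ∃ π : Equiv.Perm α, EqOn π u s := by
  classical
  exact ⟨(Equiv.Set.imageOfInjOn u s hu).extendSubtype,
    fun x hx => Equiv.extendSubtype_apply_of_mem _ x hx⟩

end Set

theorem Function.bijective_of_comp_comp_eq {f g : α → α} (hg : Bijective g) (h : f ∘ g ∘ f = f)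
    (hf : Injective f ∨ Surjective f) : Bijective f := by
  rcases hf with hf | hf
  · have hgf : g ∘ f = id := funext fun x => hf (congrFun h x)
    exact ⟨hf, fun y => ⟨g y, hg.1 (congrFun hgf (g y))⟩⟩
  · have hfg : f ∘ g = id := hf.injective_comp_right (h.trans (id_comp f).symm)
    refine ⟨fun a b hab => ?_, hf⟩
    obtain ⟨a, rfl⟩ := hg.2 a
    obtain ⟨b, rfl⟩ := hg.2 b
    rw [show a = b from (congrFun hfg a).symm.trans (hab.trans (congrFun hfg b))]

theorem exists_perm_image_eq_comp_comp_eq [Finite α] {Y : Set α} {f : α → α} (hf : f '' Y = Y) :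
    ∃ g : Equiv.Perm α, g '' Y = Y ∧ f ∘ g ∘ f = f := by
  have hYf : Y ⊆ range f := hf ▸ image_subset_range f Y
  have hpre : ∀ z ∈ range f, ∃ w, f w = z ∧ (z ∈ Y → w ∈ Y) := by
    rintro z ⟨w, rfl⟩
    by_cases hz : f w ∈ Y
    · obtain ⟨v, hv, hvz⟩ := (hf.symm ▸ hz : f w ∈ f '' Y)
      exact ⟨v, hvz, fun _ => hv⟩
    · exact ⟨w, rfl, fun h => absurd h hz⟩
  choose! s hfs hsY using hpre
  obtain ⟨g, hgs⟩ := (show LeftInvOn f s (range f) from hfs).injOn.exists_perm_eqOn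
  refine ⟨g, ?_, funext fun x => ?_⟩
  · refine eq_of_subset_of_ncard_le ?_ (ncard_image_of_injective Y g.injective).ge
    rintro _ ⟨y, hy, rfl⟩
    rw [hgs (hYf hy)]
    exact hsY y (hYf hy) hy
  · simp only [comp_apply, hgs (mem_range_self x), hfs (f x) (mem_range_self x)]

theorem exists_image_eq_not_bijective [Infinite α] (Y : Set α) :
    ∃ f : α → α, f '' Y = Y ∧ (Injective f ∨ Surjective f) ∧ ¬Bijective f := by
  have : (Y ∪ Yᶜ).Infinite := (union_compl_self Y).symm ▸ infinite_univ
  rcases infinite_union.1 this with hY | hYc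
  · have := hY.to_subtype
    obtain ⟨φ, hφ, hφi⟩ := Infinite.exists_surjective_not_injective Y
    refine ⟨Y.extendById φ, ?_, .inr (surjective_extendById.2 hφ),
      fun h => hφi (injective_extendById.1 h.1)⟩
    rw [image_extendById_self, hφ.range_eq, image_univ, Subtype.range_coe]
  · have := hYc.to_subtype
    obtain ⟨φ, hφ, hφs⟩ := Infinite.exists_injective_not_surjective (Yᶜ : Set α)
    refine ⟨Yᶜ.extendById φ, ?_, .inl (injective_extendById.2 hφ),
      fun h => hφs (surjective_extendById.1 h.2)⟩
    conv_rhs => rw [← image_id Y]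
    exact image_congr fun y hy => extendById_of_notMem (not_not_intro hy)

end

theorem stmt_8_general {X : Type*} (Y : Set X) :
    (∀ f : X → X, f '' Y = Y →
        ∃ g : X → X, Function.Bijective g ∧ g '' Y = Y ∧ f ∘ g ∘ f = f)
      ↔ Finite X := by
  refine ⟨fun H => ?_, fun _ f hf => ?_⟩
  · by_contra hX
    have := not_finite_iff_infinite.1 hX
    obtain ⟨f, hfY, hf, hfb⟩ := exists_image_eq_not_bijective Y
    obtain ⟨g, hg, -, hgf⟩ := H f hfY
    exact hfb (Function.bijective_of_comp_comp_eq hg hgf hf)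
  · obtain ⟨g, hgY, hgf⟩ := exists_perm_image_eq_comp_comp_eq hf
    exact ⟨g, g.bijective, hgY, hgf⟩

theorem stmt_8 {X : Type*} [Nonempty X] (Y : Set X) (hY : Y.Nonempty) :
    (∀ f : X → X, f '' Y = Y →
        ∃ g : X → X, Function.Bijective g ∧ g '' Y = Y ∧ f ∘ g ∘ f = f)
      ↔ Finite X :=
  stmt_8_general Y
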